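/- arXiv:1703.10357 — 4 statements merged into one kernel-verified Lean document; each statement's English description precedes it below -/
import Mathlib

section
/- Let T be a Zamfirescu mapping on a metric space X, i.e., there exist real numbers a ∈ (0,1) and b, c ∈ (0, 1/2) such that for all x, y ∈ X at least one of the following holds: (z1) d(Tx,Ty) ≤ a·d(x,y); (z2) d(Tx,Ty) ≤ b·(d(x,Tx) + d(y,Ty)); (z3) d(Tx,Ty) ≤ c·(d(x,Ty) + d(y,Tx)). Then, with δ = max{a, b/(1-b), c/(1-c)}, we have δ ∈ [0,1) and for all x, y ∈ X, d(Tx,Ty) ≤ δ·d(x,y) + 2δ·d(x,Tx). -/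
/-!
Each of the three Zamfirescu conditions yields a bound of the form
`d(Tx, Ty) ≤ k · (d(x, y) + 2 d(x, Tx))` with `k` one of `a`, `b / (1 - b)`, `c / (1 - c)`.
For (z2) and (z3) the right-hand side still contains `d(Tx, Ty)` once the triangle inequality
has removed `Ty`; absorbing it into the left-hand side turns `k` into `k / (1 - k)`.
Since `δ` dominates all three constants, the bound holds with `δ`.
-/

lemma le_div_one_sub_mul_of_le_mul_add {k t u : ℝ} (hk : k < 1) (h : t ≤ k * (u + t)) :
    t ≤ k / (1 - k) * u := by
  rw [div_mul_eq_mul_div, le_div_iff₀ (sub_pos.2 hk)]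
  linarith

lemma div_one_sub_lt_one {k : ℝ} (hk : k < 1 / 2) : k / (1 - k) < 1 := by
  rw [div_lt_one (by linarith)]
  linarith

section Zamfirescu

variable {X : Type*} [PseudoMetricSpace X] (T : X → X) (x y : X)

lemma dist_map_le_of_le_mul_dist_add_dist {b : ℝ} (hb0 : 0 ≤ b) (hb1 : b < 1)
    (h : dist (T x) (T y) ≤ b * (dist x (T x) + dist y (T y))) :
    dist (T x) (T y) ≤ b / (1 - b) * (dist x y + 2 * dist x (T x)) := by
  refine le_div_one_sub_mul_of_le_mul_add hb1 (h.trans ?_)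
  have hy : dist y (T y) ≤ dist x y + dist x (T x) + dist (T x) (T y) := by
    rw [dist_comm x y]
    exact dist_triangle4 y x (T x) (T y)
  exact mul_le_mul_of_nonneg_left (by linarith) hb0

lemma dist_map_le_of_le_mul_dist_cross {c : ℝ} (hc0 : 0 ≤ c) (hc1 : c < 1)
    (h : dist (T x) (T y) ≤ c * (dist x (T y) + dist y (T x))) :
    dist (T x) (T y) ≤ c / (1 - c) * (dist x y + 2 * dist x (T x)) := by
  refine le_div_one_sub_mul_of_le_mul_add hc1 (h.trans ?_)
  have hxy : dist x (T y) ≤ dist x (T x) + dist (T x) (T y) := dist_triangle _ _ _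
  have hyx : dist y (T x) ≤ dist x y + dist x (T x) := by
    rw [dist_comm x y]
    exact dist_triangle _ _ _
  exact mul_le_mul_of_nonneg_left (by linarith) hc0

end Zamfirescu

theorem stmt_1 {X : Type*} [MetricSpace X] (T : X → X) (a b c : ℝ)
    (ha : a ∈ Set.Ioo (0:ℝ) 1) (hb : b ∈ Set.Ioo (0:ℝ) (1/2)) (hc : c ∈ Set.Ioo (0:ℝ) (1/2))
    (hz : ∀ x y : X,
      dist (T x) (T y) ≤ a * dist x y ∨
      dist (T x) (T y) ≤ b * (dist x (T x) + dist y (T y)) ∨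
      dist (T x) (T y) ≤ c * (dist x (T y) + dist y (T x)))
    (δ : ℝ) (hδ : δ = max a (max (b / (1 - b)) (c / (1 - c)))) :
    δ ∈ Set.Ico (0:ℝ) 1 ∧
      ∀ x y : X, dist (T x) (T y) ≤ δ * dist x y + 2 * δ * dist x (T x) := by
  obtain ⟨ha0, ha1⟩ := ha
  obtain ⟨hb0, hb1⟩ := hb
  obtain ⟨hc0, hc1⟩ := hc
  have haδ : a ≤ δ := hδ ▸ le_max_left _ _
  have hbδ : b / (1 - b) ≤ δ := hδ ▸ (le_max_left _ _).trans (le_max_right _ _)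
  have hcδ : c / (1 - c) ≤ δ := hδ ▸ (le_max_right _ _).trans (le_max_right _ _)
  have hδ1 : δ < 1 := by
    rw [hδ, max_lt_iff, max_lt_iff]
    exact ⟨ha1, div_one_sub_lt_one hb1, div_one_sub_lt_one hc1⟩
  refine ⟨⟨ha0.le.trans haδ, hδ1⟩, fun x y => ?_⟩
  rw [mul_assoc, mul_left_comm 2 δ, ← mul_add]
  obtain ⟨k, hkδ, hk⟩ : ∃ k ≤ δ, dist (T x) (T y) ≤ k * (dist x y + 2 * dist x (T x)) := by
    rcases hz x y with h | h | h
    · exact ⟨a, haδ, h.trans (by gcongr; linarith [dist_nonneg (x := x) (y := T x)])⟩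
    · exact ⟨_, hbδ, dist_map_le_of_le_mul_dist_add_dist T x y hb0.le (by linarith) h⟩
    · exact ⟨_, hcδ, dist_map_le_of_le_mul_dist_cross T x y hc0.le (by linarith) h⟩
  exact hk.trans (by gcongr)
end

section
/- For δ ∈ [0,1) and α, β ∈ [0,1], one has α·δ / (1 - (1-α)δ[β + (1-β)δ]) ≤ 1 - (1-α)(1-δ), where the denominator is positive. -/
/-! Put `s = β + (1 - β) δ`. Since `s ≤ 1`, the denominator `1 - (1 - α) δ s` is at least
`1 - (1 - α) δ`, so it suffices to treat `s = 1`; there the claim reduces to the identity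
`(1 - (1 - α)(1 - δ)) (1 - (1 - α) δ) - α δ = (1 - δ) (α + (1 - α)² δ)`. -/

lemma add_one_sub_mul_le_one {β δ : ℝ} (hβ : β ≤ 1) (hδ : δ ≤ 1) : β + (1 - β) * δ ≤ 1 := by
  nlinarith

lemma one_sub_mul_le_one_sub_mul_mul {c s : ℝ} (hc : 0 ≤ c) (hs : s ≤ 1) :
    1 - c ≤ 1 - c * s := by
  nlinarith

lemma one_sub_one_sub_mul_pos {α δ : ℝ} (hα : 0 ≤ α) (hδ₀ : 0 ≤ δ) (hδ₁ : δ < 1) :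
    0 < 1 - (1 - α) * δ := by
  nlinarith

lemma mul_le_one_sub_mul_one_sub_mul {α δ : ℝ} (hα₀ : 0 ≤ α) (hδ₀ : 0 ≤ δ) (hδ₁ : δ ≤ 1) :
    α * δ ≤ (1 - (1 - α) * (1 - δ)) * (1 - (1 - α) * δ) := by
  have key : (1 - (1 - α) * (1 - δ)) * (1 - (1 - α) * δ) - α * δ
      = (1 - δ) * (α + (1 - α) ^ 2 * δ) := by ring
  have : 0 ≤ (1 - δ) * (α + (1 - α) ^ 2 * δ) := by positivity
  linarith

theorem stmt_7 (δ α β : ℝ) (hδ : δ ∈ Set.Ico (0:ℝ) 1)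
    (hα : α ∈ Set.Icc (0:ℝ) 1) (hβ : β ∈ Set.Icc (0:ℝ) 1) :
    0 < 1 - (1 - α) * δ * (β + (1 - β) * δ) ∧
      α * δ / (1 - (1 - α) * δ * (β + (1 - β) * δ)) ≤ 1 - (1 - α) * (1 - δ) := by
  obtain ⟨hδ₀, hδ₁⟩ := hδ
  obtain ⟨hα₀, hα₁⟩ := hα
  have hD₀ : 0 < 1 - (1 - α) * δ := one_sub_one_sub_mul_pos hα₀ hδ₀ hδ₁
  have hD : 1 - (1 - α) * δ ≤ 1 - (1 - α) * δ * (β + (1 - β) * δ) :=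
    one_sub_mul_le_one_sub_mul_mul (mul_nonneg (sub_nonneg.2 hα₁) hδ₀) (add_one_sub_mul_le_one hβ.2 hδ₁.le)
  refine ⟨hD₀.trans_le hD, ?_⟩
  calc α * δ / (1 - (1 - α) * δ * (β + (1 - β) * δ))
      ≤ α * δ / (1 - (1 - α) * δ) := div_le_div_of_nonneg_left (by positivity) hD₀ hD
    _ ≤ 1 - (1 - α) * (1 - δ) :=
      (div_le_iff₀ hD₀).2 (mul_le_one_sub_mul_one_sub_mul hα₀ hδ₀ hδ₁.le)
end

section
/- Let T be a contractive-like mapping with constant δ ∈ [0,1) on a nonempty closed convex subset E of a W-hyperbolic space, with a fixed point p. If the sequence {x_n} satisfies the implicit S-iteration x_n = W(Tx_{n-1}, Ty_n, α_n), y_n = W(x_n, Tx_n, β_n) with α_n, β_n ∈ [0,1] and ∑ (1 - α_n) = ∞, then x_n → p. -/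
/-!
Because `φ 0 = 0`, the contractive-like condition at the fixed point reads
`d(Tz, p) ≤ δ d(z, p)`. Feeding this into the two convex combinations of one implicit
S-step gives first `d(yₙ, p) ≤ d(xₙ, p)` and then
`d(xₙ, p) ≤ (1 - αₙ) δ d(xₙ₋₁, p) + αₙ δ d(xₙ, p)`, which solves to
`d(xₙ, p) ≤ δ d(xₙ₋₁, p)`. Hence `d(xₙ, p) ≤ δⁿ d(x₀, p) → 0`.
-/

/-- A W-hyperbolic space structure (Kohlenbach) on a metric space. -/
structure WHyperbolic (X : Type*) [MetricSpace X] where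
  W : X → X → ℝ → X
  w1 : ∀ (u x y : X) (α : ℝ), α ∈ Set.Icc (0:ℝ) 1 →
    dist u (W x y α) ≤ (1 - α) * dist u x + α * dist u y
  w2 : ∀ (x y : X) (α β : ℝ), α ∈ Set.Icc (0:ℝ) 1 → β ∈ Set.Icc (0:ℝ) 1 →
    dist (W x y α) (W x y β) = |α - β| * dist x y
  w3 : ∀ (x y : X) (α : ℝ), α ∈ Set.Icc (0:ℝ) 1 → W x y α = W y x (1 - α)
  w4 : ∀ (x y z w : X) (α : ℝ), α ∈ Set.Icc (0:ℝ) 1 →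
    dist (W x z α) (W y w α) ≤ (1 - α) * dist x y + α * dist z w

open Filter

open Set

namespace WHyperbolic

variable {X : Type*} [MetricSpace X] (H : WHyperbolic X)

theorem dist_W_le (x y u : X) {α : ℝ} (hα : α ∈ Icc (0 : ℝ) 1) :
    dist (H.W x y α) u ≤ (1 - α) * dist x u + α * dist y u := by
  simpa only [dist_comm u] using H.w1 u x y α hα

theorem dist_W_le_of_le {x y u : X} {r α : ℝ} (hα : α ∈ Icc (0 : ℝ) 1)
    (hx : dist x u ≤ r) (hy : dist y u ≤ r) : dist (H.W x y α) u ≤ r := by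
  have ⟨hα0, hα1⟩ := hα
  calc dist (H.W x y α) u ≤ (1 - α) * dist x u + α * dist y u := H.dist_W_le x y u hα
    _ ≤ (1 - α) * r + α * r := by gcongr
    _ = r := by ring

theorem dist_implicitS_step_le {E : Set X} {T : X → X} {p : X} {δ : ℝ}
    (hδ : δ ∈ Ico (0 : ℝ) 1) (hTp : ∀ w ∈ E, dist (T w) p ≤ δ * dist w p)
    {z x y : X} (hz : z ∈ E) (hxE : x ∈ E) (hyE : y ∈ E) {a b : ℝ}
    (ha : a ∈ Icc (0 : ℝ) 1) (hb : b ∈ Icc (0 : ℝ) 1)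
    (hx : x = H.W (T z) (T y) a) (hy : y = H.W x (T x) b) :
    dist x p ≤ δ * dist z p := by
  obtain ⟨hδ0, hδ1⟩ := hδ
  have ⟨ha0, ha1⟩ := ha
  have hyx : dist y p ≤ dist x p := by
    rw [hy]
    refine H.dist_W_le_of_le hb le_rfl ((hTp x hxE).trans ?_)
    exact mul_le_of_le_one_left dist_nonneg hδ1.le
  have hx_le : dist x p ≤ (1 - a) * (δ * dist z p) + a * (δ * dist x p) := by
    calc dist x p ≤ (1 - a) * dist (T z) p + a * dist (T y) p := by
          rw [hx]; exact H.dist_W_le _ _ _ ha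
      _ ≤ (1 - a) * (δ * dist z p) + a * (δ * dist x p) := by
          gcongr
          · exact hTp z hz
          · exact (hTp y hyE).trans (by gcongr)
  have hpos : 0 < 1 - a * δ := by linarith [mul_le_of_le_one_left hδ0 ha1]
  refine le_of_mul_le_mul_right ?_ hpos
  calc dist x p * (1 - a * δ) ≤ (1 - a) * (δ * dist z p) := by linarith
    _ ≤ δ * dist z p * (1 - a * δ) := by
        have : 0 ≤ a * δ * dist z p * (1 - δ) := by
          have := sub_nonneg.2 hδ1.le
          positivity
        linarith

end WHyperbolic

theorem dist_apply_le_of_isFixedPt {X : Type*} [MetricSpace X] {E : Set X} {T : X → X}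
    {δ : ℝ} {φ : ℝ → ℝ} (hφ0 : φ 0 = 0)
    (hT : ∀ x ∈ E, ∀ y ∈ E, dist (T x) (T y) ≤ δ * dist x y + φ (dist x (T x)))
    {p : X} (hpE : p ∈ E) (hp : T p = p) {z : X} (hz : z ∈ E) :
    dist (T z) p ≤ δ * dist z p := by
  simpa only [hp, dist_self, hφ0, add_zero, dist_comm p] using hT p hpE z hz

theorem stmt_8_general {X : Type*} [MetricSpace X] (H : WHyperbolic X)
    (E : Set X)
    (T : X → X)
    (δ : ℝ) (hδ : δ ∈ Set.Ico (0:ℝ) 1) (φ : ℝ → ℝ)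
    (hφ0 : φ 0 = 0)
    (hT : ∀ x ∈ E, ∀ y ∈ E, dist (T x) (T y) ≤ δ * dist x y + φ (dist x (T x)))
    (p : X) (hpE : p ∈ E) (hp : T p = p)
    (α β : ℕ → ℝ) (hα : ∀ n, α n ∈ Set.Icc (0:ℝ) 1) (hβ : ∀ n, β n ∈ Set.Icc (0:ℝ) 1)
    (x y : ℕ → X) (hxE : ∀ n, x n ∈ E) (hyE : ∀ n, y n ∈ E)
    (hx : ∀ n ≥ 1, x n = H.W (T (x (n - 1))) (T (y n)) (α n))
    (hy : ∀ n ≥ 1, y n = H.W (x n) (T (x n)) (β n)) :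
    Tendsto x atTop (nhds p) := by
  have hTp : ∀ z ∈ E, dist (T z) p ≤ δ * dist z p :=
    fun z hz => dist_apply_le_of_isFixedPt hφ0 hT hpE hp hz
  have hstep : ∀ n, dist (x (n + 1)) p ≤ δ * dist (x n) p := fun n =>
    H.dist_implicitS_step_le hδ hTp (hxE n) (hxE (n + 1)) (hyE (n + 1)) (hα (n + 1))
      (hβ (n + 1)) (hx (n + 1) n.succ_pos) (hy (n + 1) n.succ_pos)
  have hgeom : ∀ n, dist (x n) p ≤ δ ^ n * dist (x 0) p := fun n =>
    le_geom (u := fun n => dist (x n) p) hδ.1 n fun k _ => hstep k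
  rw [tendsto_iff_dist_tendsto_zero]
  refine squeeze_zero (fun n => dist_nonneg) hgeom ?_
  simpa using (tendsto_pow_atTop_nhds_zero_of_lt_one hδ.1 hδ.2).mul_const (dist (x 0) p)

theorem stmt_8 {X : Type*} [MetricSpace X] (H : WHyperbolic X)
    (E : Set X) (hE : E.Nonempty) (hEclosed : IsClosed E)
    (hEconvex : ∀ x ∈ E, ∀ y ∈ E, ∀ α ∈ Set.Icc (0:ℝ) 1, H.W x y α ∈ E)
    (T : X → X) (hTE : ∀ x ∈ E, T x ∈ E)
    (δ : ℝ) (hδ : δ ∈ Set.Ico (0:ℝ) 1) (φ : ℝ → ℝ)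
    (hφmono : StrictMonoOn φ (Set.Ici 0)) (hφcont : ContinuousOn φ (Set.Ici 0))
    (hφ0 : φ 0 = 0) (hφnonneg : ∀ t, 0 ≤ t → 0 ≤ φ t)
    (hT : ∀ x ∈ E, ∀ y ∈ E, dist (T x) (T y) ≤ δ * dist x y + φ (dist x (T x)))
    (p : X) (hpE : p ∈ E) (hp : T p = p)
    (α β : ℕ → ℝ) (hα : ∀ n, α n ∈ Set.Icc (0:ℝ) 1) (hβ : ∀ n, β n ∈ Set.Icc (0:ℝ) 1)
    (hαdiv : Tendsto (fun N => ∑ n ∈ Finset.range N, (1 - α n)) atTop atTop)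
    (x y : ℕ → X) (hxE : ∀ n, x n ∈ E) (hyE : ∀ n, y n ∈ E)
    (hx : ∀ n ≥ 1, x n = H.W (T (x (n - 1))) (T (y n)) (α n))
    (hy : ∀ n ≥ 1, y n = H.W (x n) (T (x n)) (β n)) :
    Tendsto x atTop (nhds p) :=
  stmt_8_general H E T δ hδ φ hφ0 hT p hpE hp α β hα hβ x y hxE hyE hx hy
end

section
/- Fix δ ∈ (0,1) and sequences α_n = 1 - 1/n, β_n = 1 - 1/n for n ≥ 2. Let a_n = (α_n δ / (1 - (1-α_n)δ[β_n + (1-β_n)δ]))^n · C and b_n = (α_n / (1 - (1-α_n)δ))^n · C for a constant C > 0. Then a_n / b_n → 0 as n → ∞. -/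
/-!
With `x = 1 - α_n = 1/n` the constant `C` and the factor `α_n` cancel, and
`a_n / b_n = ρ_n ^ n` with `ρ_n = δ (1 - xδ) / (1 - xδ(β_n + (1 - β_n)δ))`.
As `α_n, β_n → 1`, `ρ_n → δ < 1`, so `ρ_n ^ n` is eventually dominated by a geometric
sequence with ratio in `(δ, 1)`.
-/

open Filter Topology

theorem tendsto_pow_self_nhds_zero_of_tendsto_norm {R : Type*} [SeminormedRing R]
    {r : ℕ → R} {ρ : ℝ} (hr : Tendsto (fun n => ‖r n‖) atTop (𝓝 ρ)) (hρ : ρ < 1) :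
    Tendsto (fun n => r n ^ n) atTop (𝓝 0) := by
  obtain ⟨c, hρc, hc1⟩ := exists_between hρ
  have hc0 : 0 ≤ c := (ge_of_tendsto hr (.of_forall fun _ => norm_nonneg _)).trans hρc.le
  have h_le : ∀ᶠ n in atTop, ‖r n‖ ≤ c := hr.eventually (eventually_le_nhds hρc)
  refine squeeze_zero_norm' ?_ (tendsto_pow_atTop_nhds_zero_of_lt_one hc0 hc1)
  filter_upwards [h_le, eventually_gt_atTop 0] with n hn hn0
  exact (norm_pow_le' _ hn0).trans (pow_le_pow_left₀ (norm_nonneg _) hn n)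

theorem stmt_11 (δ C : ℝ) (hδ : δ ∈ Set.Ioo (0:ℝ) 1) (hC : 0 < C)
    (α β a b : ℕ → ℝ)
    (hα : ∀ n ≥ 2, α n = 1 - 1 / (n : ℝ))
    (hβ : ∀ n ≥ 2, β n = 1 - 1 / (n : ℝ))
    (ha : ∀ n ≥ 2, a n =
      (α n * δ / (1 - (1 - α n) * δ * (β n + (1 - β n) * δ))) ^ n * C)
    (hb : ∀ n ≥ 2, b n = (α n / (1 - (1 - α n) * δ)) ^ n * C) :
    Tendsto (fun n => a n / b n) atTop (nhds 0) := by
  obtain ⟨hδ0, hδ1⟩ := hδ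
  have h1 : Tendsto (fun _ : ℕ => (1 : ℝ)) atTop (𝓝 1) := tendsto_const_nhds
  have h_one_sub : Tendsto (fun n : ℕ => 1 - 1 / (n : ℝ)) atTop (𝓝 1) := by
    simpa using h1.sub tendsto_one_div_atTop_nhds_zero_nat
  have hα1 : Tendsto α atTop (𝓝 1) :=
    h_one_sub.congr' (eventually_atTop.2 ⟨2, fun n hn => (hα n hn).symm⟩)
  have hβ1 : Tendsto β atTop (𝓝 1) :=
    h_one_sub.congr' (eventually_atTop.2 ⟨2, fun n hn => (hβ n hn).symm⟩)
  have hD : Tendsto (fun n => 1 - (1 - α n) * δ) atTop (𝓝 1) := by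
    simpa using h1.sub ((h1.sub hα1).mul_const δ)
  have hρ : Tendsto (fun n => δ * (1 - (1 - α n) * δ) /
      (1 - (1 - α n) * δ * (β n + (1 - β n) * δ))) atTop (𝓝 δ) := by
    simpa [Pi.div_def] using (hD.const_mul δ).div
      (h1.sub (((h1.sub hα1).mul_const δ).mul (hβ1.add ((h1.sub hβ1).mul_const δ)))) (by simp)
  refine (tendsto_pow_self_nhds_zero_of_tendsto_norm hρ.norm
    (by rwa [Real.norm_of_nonneg hδ0.le])).congr' ?_
  filter_upwards [eventually_ge_atTop 2, hα1.eventually_ne one_ne_zero,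
    hD.eventually_ne one_ne_zero] with n hn hαn hDn
  rw [ha n hn, hb n hn, mul_div_mul_right _ _ hC.ne', ← div_pow]
  field_simp
end
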